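/- arXiv:0712.4136 — 4 statements merged into one kernel-verified Lean document; each statement's English description precedes it below -/
import Mathlib

section
/- Let μ be a positive even measure on ℝ with moments ∫dμ = C₀, ∫ω²dμ = C₂, ∫ω⁴dμ = C₄, and set ω₂² = C₄/C₂. Then for any x > ω₂, ∫_{|ω|≤x} ω² dμ ≥ C₂·(x² − ω₂²)/(x² + ω₂²). -/
open MeasureTheory

/-- Chebyshev–Markov type inequality: for a positive even measure with moments
C₀, C₂, C₄ and ω₂² = C₄/C₂, for any x > ω₂ one has
∫_{|ω|≤x} ω² dμ ≥ C₂ (x² − ω₂²)/(x² + ω₂²). -/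
theorem chebyshev_markov_second_moment
    (μ : Measure ℝ) [IsFiniteMeasure μ]
    (heven : μ.map (fun ω => -ω) = μ)
    (C0 C2 C4 : ℝ) (hC2 : 0 < C2) (hC4 : 0 < C4)
    (hint : Integrable (fun ω => ω ^ 4) μ)
    (hC0 : (∫ ω, (1 : ℝ) ∂μ) = C0)
    (hC2' : (∫ ω, ω ^ 2 ∂μ) = C2)
    (hC4' : (∫ ω, ω ^ 4 ∂μ) = C4)
    (ω2 : ℝ) (hω2 : ω2 = Real.sqrt (C4 / C2))
    (x : ℝ) (hx : ω2 < x) :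
    C2 * (x ^ 2 - ω2 ^ 2) / (x ^ 2 + ω2 ^ 2) ≤ ∫ ω in Set.Icc (-x) x, ω ^ 2 ∂μ := by
  have hω2nn : 0 ≤ ω2 := hω2 ▸ Real.sqrt_nonneg _
  have hxpos : 0 < x := lt_of_le_of_lt hω2nn hx
  have hω2sq : ω2 ^ 2 = C4 / C2 := by
    rw [hω2, Real.sq_sqrt (le_of_lt (div_pos hC4 hC2))]
  -- integrability of ω²
  have hI2 : Integrable (fun ω => ω ^ 2) μ := by
    have hb : Integrable (fun ω => 1 + ω ^ 4) μ := (integrable_const 1).add hint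
    refine hb.mono' (by fun_prop) (Filter.Eventually.of_forall fun ω => ?_)
    rw [Real.norm_eq_abs, abs_of_nonneg (sq_nonneg ω)]
    nlinarith [sq_nonneg ω, sq_nonneg (ω ^ 2 - 1)]
  have hs : MeasurableSet (Set.Icc (-x) x) := measurableSet_Icc
  -- split the integral
  have hsplit : (∫ ω in Set.Icc (-x) x, ω ^ 2 ∂μ)
      = C2 - ∫ ω in (Set.Icc (-x) x)ᶜ, ω ^ 2 ∂μ := by
    have := integral_add_compl hs hI2
    rw [hC2'] at this
    linarith
  -- tail bound
  have htail : (∫ ω in (Set.Icc (-x) x)ᶜ, ω ^ 2 ∂μ) ≤ C4 / x ^ 2 := by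
    have h1 : (∫ ω in (Set.Icc (-x) x)ᶜ, ω ^ 2 ∂μ)
        ≤ ∫ ω in (Set.Icc (-x) x)ᶜ, ω ^ 4 / x ^ 2 ∂μ := by
      refine setIntegral_mono_on (hI2.integrableOn)
        ((hint.div_const _).integrableOn) hs.compl ?_
      intro ω hω
      simp only [Set.mem_compl_iff, Set.mem_Icc, not_and_or, not_le] at hω
      have hx2 : x ^ 2 ≤ ω ^ 2 := by
        rcases hω with h | h <;> nlinarith
      rw [le_div_iff₀ (by positivity : (0:ℝ) < x ^ 2)]
      nlinarith [sq_nonneg ω]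
    have h2 : (∫ ω in (Set.Icc (-x) x)ᶜ, ω ^ 4 / x ^ 2 ∂μ)
        ≤ ∫ ω, ω ^ 4 / x ^ 2 ∂μ := by
      refine setIntegral_le_integral (hint.div_const _)
        (Filter.Eventually.of_forall fun ω => ?_)
      positivity
    have h3 : (∫ ω, ω ^ 4 / x ^ 2 ∂μ) = C4 / x ^ 2 := by
      rw [integral_div, hC4']
    linarith
  rw [hsplit]
  -- arithmetic conclusion
  have hnum : 0 ≤ C2 * (x ^ 2 - ω2 ^ 2) := by
    have : ω2 ^ 2 < x ^ 2 := by nlinarith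
    nlinarith
  have hC4eq : C4 = C2 * ω2 ^ 2 := by
    rw [hω2sq]; field_simp
  have key : C2 * (x ^ 2 - ω2 ^ 2) / (x ^ 2 + ω2 ^ 2)
      ≤ C2 * (x ^ 2 - ω2 ^ 2) / x ^ 2 :=
    div_le_div_of_nonneg_left hnum (by positivity) (by nlinarith)
  have : C2 * (x ^ 2 - ω2 ^ 2) / x ^ 2 = C2 - C4 / x ^ 2 := by
    rw [hC4eq]; field_simp
  linarith
end

section
/- Let Σ be a nondecreasing function on [0,∞) and suppose for all k ≥ K: |Σ(α₊(k)) − Σ(α₋(k))| ≤ (ω_p/α₊(k))^μ · (|α₊(k) − α₋(k)|/ω_p)^ν, where α_±(k) = ±kv + ħk²/(2M), with μ ≥ 3, 0 < ν ≤ 1, and ħ, v, M, ω_p > 0. Then the double integral I = ∫_K^∞ (1/k) [∫_{α₋(k)}^{α₊(k)} ω² dΣ(ω)] dk is finite whenever K > 2Mv/ħ. -/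
/-!
Since α₋ ≥ -α₊, the inner integral is at most α₊² (Σ(α₊) - Σ(α₋)) ≤ ω_p^μ α₊^(2-μ) (2kv/ω_p)^ν.
As α₊(k) ≥ ħk²/(2M) and μ ≥ 2, the integrand is then O(k^(ν+3-2μ)), and ν + 3 - 2μ ≤ -2 makes
this integrable on (K, ∞) for any K > 0.
-/

open MeasureTheory Set

namespace StieltjesFunction

lemma norm_setIntegral_Ioc_le {E : Type*} [NormedAddCommGroup E] [NormedSpace ℝ E]
    (f : StieltjesFunction ℝ) {g : ℝ → E} {a b C : ℝ} (hab : a ≤ b)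
    (hg : ∀ ω ∈ Ioc a b, ‖g ω‖ ≤ C) :
    ‖∫ ω in Ioc a b, g ω ∂f.measure‖ ≤ C * (f b - f a) := by
  have hfin : f.measure (Ioc a b) < ⊤ := by rw [f.measure_Ioc]; exact ENNReal.ofReal_lt_top
  have h := norm_setIntegral_le_of_norm_le_const hfin hg
  rwa [measureReal_def, f.measure_Ioc, ENNReal.toReal_ofReal (sub_nonneg.2 (f.mono hab))] at h

lemma setIntegral_Ioc_sq_le (f : StieltjesFunction ℝ) {a b : ℝ} (hab : a ≤ b) (hba : -b ≤ a) :
    ∫ ω in Ioc a b, ω ^ 2 ∂f.measure ≤ b ^ 2 * (f b - f a) :=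
  (le_abs_self _).trans <| f.norm_setIntegral_Ioc_le hab fun ω hω => by
    rw [Real.norm_eq_abs, abs_of_nonneg (sq_nonneg ω)]
    exact sq_le_sq' (hba.trans hω.1.le) hω.2

end StieltjesFunction

lemma sq_mul_div_rpow_le {a m ω μ : ℝ} (hm : 0 < m) (hma : m ≤ a) (hω : 0 ≤ ω) (hμ : 2 ≤ μ) :
    a ^ 2 * (ω / a) ^ μ ≤ ω ^ μ * m ^ (2 - μ) := by
  have ha : 0 < a := hm.trans_le hma
  calc a ^ 2 * (ω / a) ^ μ = ω ^ μ * a ^ (2 - μ) := by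
        rw [Real.div_rpow hω ha.le, Real.rpow_sub ha, Real.rpow_two]; ring
    _ ≤ ω ^ μ * m ^ (2 - μ) :=
        mul_le_mul_of_nonneg_left (Real.rpow_le_rpow_of_nonpos hm hma (by linarith)) (by positivity)

noncomputable def alphaPlus (hbar v M k : ℝ) : ℝ := k * v + hbar * k ^ 2 / (2 * M)

noncomputable def alphaMinus (hbar v M k : ℝ) : ℝ := -(k * v) + hbar * k ^ 2 / (2 * M)

section Dispersion

variable {hbar v M k : ℝ}

lemma alphaPlus_sub_alphaMinus : alphaPlus hbar v M k - alphaMinus hbar v M k = 2 * (k * v) := by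
  unfold alphaPlus alphaMinus; ring

lemma alphaMinus_le_alphaPlus (hv : 0 ≤ v) (hk : 0 ≤ k) :
    alphaMinus hbar v M k ≤ alphaPlus hbar v M k := by
  have := alphaPlus_sub_alphaMinus (hbar := hbar) (v := v) (M := M) (k := k)
  nlinarith [mul_nonneg hk hv]

lemma neg_alphaPlus_le_alphaMinus (hhbar : 0 ≤ hbar) (hM : 0 < M) :
    -alphaPlus hbar v M k ≤ alphaMinus hbar v M k := by
  unfold alphaPlus alphaMinus
  nlinarith [show 0 ≤ hbar * k ^ 2 / (2 * M) by positivity]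

lemma mul_sq_le_alphaPlus (hv : 0 ≤ v) (hk : 0 ≤ k) :
    hbar / (2 * M) * k ^ 2 ≤ alphaPlus hbar v M k := by
  unfold alphaPlus
  nlinarith [mul_nonneg hk hv, show hbar * k ^ 2 / (2 * M) = hbar / (2 * M) * k ^ 2 by ring]

end Dispersion

lemma one_div_mul_alphaPlus_sq_mul_rpow_le {hbar v M ωp μ ν k : ℝ} (hhbar : 0 < hbar) (hv : 0 < v)
    (hM : 0 < M) (hωp : 0 < ωp) (hμ : 2 ≤ μ) (hk : 0 < k) :
    1 / k * (alphaPlus hbar v M k ^ 2 *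
      ((ωp / alphaPlus hbar v M k) ^ μ * (2 * (k * v) / ωp) ^ ν))
      ≤ ωp ^ μ * (hbar / (2 * M)) ^ (2 - μ) * (2 * v / ωp) ^ ν * k ^ (ν + 3 - 2 * μ) := by
  have hc : 0 < hbar / (2 * M) := by positivity
  calc 1 / k * (alphaPlus hbar v M k ^ 2 *
        ((ωp / alphaPlus hbar v M k) ^ μ * (2 * (k * v) / ωp) ^ ν))
      = 1 / k * (alphaPlus hbar v M k ^ 2 * (ωp / alphaPlus hbar v M k) ^ μ)
          * (2 * (k * v) / ωp) ^ ν := by ring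
    _ ≤ 1 / k * (ωp ^ μ * (hbar / (2 * M) * k ^ 2) ^ (2 - μ)) * (2 * (k * v) / ωp) ^ ν := by
        gcongr 1 / k * ?_ * _
        exact sq_mul_div_rpow_le (by positivity) (mul_sq_le_alphaPlus hv.le hk.le) hωp.le hμ
    _ = ωp ^ μ * (hbar / (2 * M)) ^ (2 - μ) * (2 * v / ωp) ^ ν * k ^ (ν + 3 - 2 * μ) := by
        rw [show 2 * (k * v) / ωp = 2 * v / ωp * k by ring, Real.mul_rpow hc.le (by positivity),
          Real.mul_rpow (by positivity) hk.le, ← Real.rpow_natCast_mul hk.le,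
          show ν + 3 - 2 * μ = -1 + ((2 : ℕ) * (2 - μ) + ν) by push_cast; ring,
          Real.rpow_add hk, Real.rpow_add hk, Real.rpow_neg_one]
        ring

lemma tail_integrand_le_rpow (Sg : StieltjesFunction ℝ) {hbar v M ωp μ ν k : ℝ}
    (hhbar : 0 < hbar) (hv : 0 < v) (hM : 0 < M) (hωp : 0 < ωp) (hμ : 2 ≤ μ) (hk : 0 < k)
    (hHolder : |Sg (alphaPlus hbar v M k) - Sg (alphaMinus hbar v M k)|
      ≤ (ωp / alphaPlus hbar v M k) ^ μ *
        (|alphaPlus hbar v M k - alphaMinus hbar v M k| / ωp) ^ ν) :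
    1 / k * ∫ ω in Ioc (alphaMinus hbar v M k) (alphaPlus hbar v M k), ω ^ 2 ∂Sg.measure
      ≤ ωp ^ μ * (hbar / (2 * M)) ^ (2 - μ) * (2 * v / ωp) ^ ν * k ^ (ν + 3 - 2 * μ) := by
  rw [alphaPlus_sub_alphaMinus, abs_of_nonneg (by positivity : (0 : ℝ) ≤ 2 * (k * v))] at hHolder
  refine le_trans ?_ (one_div_mul_alphaPlus_sq_mul_rpow_le hhbar hv hM hωp hμ hk)
  gcongr 1 / k * ?_
  calc ∫ ω in Ioc (alphaMinus hbar v M k) (alphaPlus hbar v M k), ω ^ 2 ∂Sg.measure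
      ≤ alphaPlus hbar v M k ^ 2 * (Sg (alphaPlus hbar v M k) - Sg (alphaMinus hbar v M k)) :=
        Sg.setIntegral_Ioc_sq_le (alphaMinus_le_alphaPlus hv.le hk.le)
          (neg_alphaPlus_le_alphaMinus hhbar.le hM)
    _ ≤ _ := by
        gcongr
        exact (le_abs_self _).trans hHolder

theorem tail_integral_finite_general
    (Sg : StieltjesFunction ℝ) (hbar v M ωp : ℝ)
    (hhbar : 0 < hbar) (hv : 0 < v) (hM : 0 < M) (hωp : 0 < ωp)
    (μ ν : ℝ) (hμ : 3 ≤ μ) (hν1 : ν ≤ 1)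
    (K : ℝ) (hK : 2 * M * v / hbar < K)
    (αm αp : ℝ → ℝ)
    (hαm : αm = fun k => -(k * v) + hbar * k ^ 2 / (2 * M))
    (hαp : αp = fun k => k * v + hbar * k ^ 2 / (2 * M))
    (hHolder : ∀ k, K ≤ k →
      |Sg (αp k) - Sg (αm k)| ≤ (ωp / αp k) ^ μ * (|αp k - αm k| / ωp) ^ ν) :
    (∫⁻ k in Set.Ioi K,
        ENNReal.ofReal ((1 / k) * ∫ ω in Set.Ioc (αm k) (αp k), ω ^ 2 ∂Sg.measure))
      < ⊤ := by
  obtain rfl : αm = alphaMinus hbar v M := hαm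
  obtain rfl : αp = alphaPlus hbar v M := hαp
  have hK0 : 0 < K := (by positivity : 0 < 2 * M * v / hbar).trans hK
  have hdominant : IntegrableOn
      (fun k => ωp ^ μ * (hbar / (2 * M)) ^ (2 - μ) * (2 * v / ωp) ^ ν * k ^ (ν + 3 - 2 * μ))
      (Ioi K) :=
    (integrableOn_Ioi_rpow_of_lt (by linarith) hK0).const_mul _
  calc _ ≤ ∫⁻ k in Ioi K, ENNReal.ofReal
          (ωp ^ μ * (hbar / (2 * M)) ^ (2 - μ) * (2 * v / ωp) ^ ν * k ^ (ν + 3 - 2 * μ)) :=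
        setLIntegral_mono' measurableSet_Ioi fun k hk => ENNReal.ofReal_le_ofReal <|
          tail_integrand_le_rpow Sg hhbar hv hM hωp (by linarith) (hK0.trans hk)
            (hHolder k (le_of_lt hk))
    _ < ⊤ := hdominant.lintegral_lt_top

/-- Under the Hölder-type decay condition on the spectral distribution Sg,
the tail double integral ∫_K^∞ (1/k) ∫_{α₋}^{α₊} ω² dSg dk is finite
whenever K > 2Mv/hbar. -/
theorem tail_integral_finite
    (Sg : StieltjesFunction ℝ) (hbar v M ωp : ℝ)
    (hhbar : 0 < hbar) (hv : 0 < v) (hM : 0 < M) (hωp : 0 < ωp)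
    (μ ν : ℝ) (hμ : 3 ≤ μ) (hν0 : 0 < ν) (hν1 : ν ≤ 1)
    (K : ℝ) (hK : 2 * M * v / hbar < K)
    (αm αp : ℝ → ℝ)
    (hαm : αm = fun k => -(k * v) + hbar * k ^ 2 / (2 * M))
    (hαp : αp = fun k => k * v + hbar * k ^ 2 / (2 * M))
    (hHolder : ∀ k, K ≤ k →
      |Sg (αp k) - Sg (αm k)| ≤ (ωp / αp k) ^ μ * (|αp k - αm k| / ωp) ^ ν) :
    (∫⁻ k in Set.Ioi K,
        ENNReal.ofReal ((1 / k) * ∫ ω in Set.Ioc (αm k) (αp k), ω ^ 2 ∂Sg.measure))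
      < ⊤ :=
  tail_integral_finite_general Sg hbar v M ωp hhbar hv hM hωp μ ν hμ hν1 K hK αm αp hαm hαp hHolder
end

section
/- Let f: (0,∞) → ℝ, f(k) = (ω_p² + w k² + ħ²k⁴/(4m²))^{1/2} with ω_p, w, ħ, m > 0 and v > 0 large. The set {k > 0 : f(k) < kv} is an interval (k₁, k₂) with endpoints satisfying k₁ = ω_p/v·(1 + o(1)) and k₂ = 2mv/ħ·(1 + o(1)) as v → ∞. -/
/-!
With `X = k²` and `a = ħ²/(4m²)`, squaring turns `f(k) < kv` into the quadratic inequality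
`a X² - (v² - w) X + ω_p² < 0`. For large `v` its discriminant is positive and both roots are
positive, so the set is `(√X₁, √X₂)`. Since `√Δ ~ v² - w ~ v²`, the large root is
`X₂ ~ v²/a = (2mv/ħ)²`, and `X₁ = ω_p²/(a X₂) ~ ω_p²/v²`.
-/

open Filter Topology

/-- The roots of `a x² - b x + c`. The smaller one is written as `2c / (b + √Δ)` rather than
`(b - √Δ) / (2a)`: this avoids cancellation and exhibits its size `c / b` for large `b`. -/
noncomputable def quadRootLo (a b c : ℝ) : ℝ := 2 * c / (b + √(b ^ 2 - 4 * a * c))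

noncomputable def quadRootHi (a b c : ℝ) : ℝ := (b + √(b ^ 2 - 4 * a * c)) / (2 * a)

section Roots

variable {a b c : ℝ}

theorem quadRootLo_pos (hb : 0 < b) (hc : 0 < c) : 0 < quadRootLo a b c := by
  unfold quadRootLo
  positivity

theorem quadRootLo_lt_quadRootHi (ha : 0 < a) (hb : 0 < b) (hd : 4 * a * c < b ^ 2) :
    quadRootLo a b c < quadRootHi a b c := by
  have hS := Real.sqrt_nonneg (b ^ 2 - 4 * a * c)
  unfold quadRootLo quadRootHi
  rw [div_lt_div_iff₀ (by positivity) (by positivity)]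
  nlinarith

theorem quadratic_eq_mul_sub_quadRootLo_mul_sub_quadRootHi (ha : a ≠ 0) (hb : 0 < b)
    (hd : 4 * a * c ≤ b ^ 2) (x : ℝ) :
    a * x ^ 2 - b * x + c = a * ((x - quadRootLo a b c) * (x - quadRootHi a b c)) := by
  have hS := Real.sq_sqrt (sub_nonneg.2 hd)
  have hbS : b + √(b ^ 2 - 4 * a * c) ≠ 0 := by positivity
  unfold quadRootLo quadRootHi
  generalize √(b ^ 2 - 4 * a * c) = S at *
  field_simp
  linear_combination x * hS

theorem quadratic_neg_iff (ha : 0 < a) (hb : 0 < b) (hd : 4 * a * c < b ^ 2) (x : ℝ) :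
    a * x ^ 2 - b * x + c < 0 ↔ x ∈ Set.Ioo (quadRootLo a b c) (quadRootHi a b c) := by
  have hlt := quadRootLo_lt_quadRootHi ha hb hd
  rw [quadratic_eq_mul_sub_quadRootLo_mul_sub_quadRootHi ha.ne' hb hd.le,
    ← smul_eq_mul, smul_neg_iff_of_pos_left ha, mul_neg_iff, Set.mem_Ioo]
  constructor
  · rintro (⟨h₁, h₂⟩ | ⟨h₁, h₂⟩) <;> constructor <;> linarith
  · rintro ⟨h₁, h₂⟩
    exact Or.inl ⟨by linarith, by linarith⟩

end Roots

theorem tendsto_sqrt_sq_sub_div_self (d : ℝ) :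
    Tendsto (fun b => √(b ^ 2 - d) / b) atTop (𝓝 1) := by
  have h : Tendsto (fun b : ℝ => √(1 - d / b ^ 2)) atTop (𝓝 1) := by
    simpa using ((tendsto_const_nhds (x := (1 : ℝ))).sub
      ((tendsto_const_nhds (x := d)).div_atTop (tendsto_pow_atTop two_ne_zero))).sqrt
  refine h.congr' ?_
  filter_upwards [eventually_gt_atTop 0] with b hb
  rw [one_sub_div (by positivity), Real.sqrt_div' _ (by positivity), Real.sqrt_sq hb.le]

theorem tendsto_quadRootHi_div_self (a c : ℝ) :
    Tendsto (fun b => quadRootHi a b c / b) atTop (𝓝 a⁻¹) := by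
  have h := ((tendsto_sqrt_sq_sub_div_self (4 * a * c)).const_add 1).div_const (2 * a)
  rw [show (1 + 1) / (2 * a) = a⁻¹ by ring] at h
  refine h.congr' ?_
  filter_upwards [eventually_ne_atTop 0] with b hb
  rw [quadRootHi, div_right_comm, add_div b, div_self hb]

theorem tendsto_quadRootLo_mul_self (a c : ℝ) :
    Tendsto (fun b => quadRootLo a b c * b) atTop (𝓝 c) := by
  have h := (tendsto_const_nhds (x := 2 * c)).div
    ((tendsto_sqrt_sq_sub_div_self (4 * a * c)).const_add 1) (by norm_num)
  rw [show 2 * c / (1 + 1) = c by ring] at h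
  refine h.congr' ?_
  filter_upwards [eventually_ne_atTop 0] with b hb
  rw [Pi.div_apply, quadRootLo, ← div_self hb, ← add_div, div_div_eq_mul_div,
    mul_div_right_comm]

theorem tendsto_sqrt_div_of_tendsto_div_sq {α : Type*} {l : Filter α} {f g : α → ℝ}
    (hg : ∀ᶠ x in l, 0 < g x) (h : Tendsto (fun x => f x / g x ^ 2) l (𝓝 1)) :
    Tendsto (fun x => √(f x) / g x) l (𝓝 1) := by
  have h' : Tendsto (fun x => √(f x / g x ^ 2)) l (𝓝 1) := by simpa using h.sqrt
  refine h'.congr' ?_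
  filter_upwards [hg] with x hx
  rw [Real.sqrt_div' _ (by positivity), Real.sqrt_sq hx.le]

theorem tendsto_sq_sub_atTop (w : ℝ) : Tendsto (fun v : ℝ => v ^ 2 - w) atTop atTop :=
  tendsto_atTop_add_const_right _ _ (tendsto_pow_atTop two_ne_zero)

theorem tendsto_sq_sub_div_sq (w : ℝ) :
    Tendsto (fun v : ℝ => (v ^ 2 - w) / v ^ 2) atTop (𝓝 1) := by
  have h := (tendsto_const_nhds (x := (1 : ℝ))).sub
    ((tendsto_const_nhds (x := w)).div_atTop (tendsto_pow_atTop two_ne_zero))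
  rw [sub_zero] at h
  refine h.congr' ?_
  filter_upwards [eventually_ne_atTop 0] with v hv
  rw [one_sub_div (by positivity)]

theorem setOf_sqrt_lt_mul_eq_Ioo {a c w v : ℝ} (ha : 0 < a) (hv : 0 < v) (hb : 0 < v ^ 2 - w)
    (hd : 4 * a * c < (v ^ 2 - w) ^ 2) :
    {k : ℝ | 0 < k ∧ √(c + w * k ^ 2 + a * k ^ 4) < k * v} =
      Set.Ioo √(quadRootLo a (v ^ 2 - w) c) √(quadRootHi a (v ^ 2 - w) c) := by
  have key : ∀ k > 0, √(c + w * k ^ 2 + a * k ^ 4) < k * v ↔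
      √(quadRootLo a (v ^ 2 - w) c) < k ∧ k < √(quadRootHi a (v ^ 2 - w) c) := by
    intro k hk
    rw [Real.sqrt_lt' (by positivity), Real.sqrt_lt' hk, Real.lt_sqrt hk.le, ← Set.mem_Ioo,
      ← quadratic_neg_iff ha hb hd]
    constructor <;> intro h <;> linarith
  ext k
  constructor
  · rintro ⟨hk, h⟩
    exact (key k hk).1 h
  · rintro ⟨h₁, h₂⟩
    have hk := (Real.sqrt_nonneg _).trans_lt h₁
    exact ⟨hk, (key k hk).2 ⟨h₁, h₂⟩⟩

theorem tendsto_sqrt_quadRootLo_div {ωp : ℝ} (hωp : 0 < ωp) (a w : ℝ) :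
    Tendsto (fun v => √(quadRootLo a (v ^ 2 - w) (ωp ^ 2)) / (ωp / v)) atTop (𝓝 1) := by
  refine tendsto_sqrt_div_of_tendsto_div_sq
    ((eventually_gt_atTop 0).mono fun v hv => by positivity) ?_
  have h := (((tendsto_quadRootLo_mul_self a (ωp ^ 2)).comp (tendsto_sq_sub_atTop w)).div
    (tendsto_sq_sub_div_sq w) one_ne_zero).div_const (ωp ^ 2)
  rw [div_one, div_self (by positivity)] at h
  refine h.congr' ?_
  filter_upwards [eventually_ne_atTop 0, (tendsto_sq_sub_atTop w).eventually_ne_atTop 0]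
    with v hv hb
  simp only [Pi.div_apply, Function.comp_apply]
  field_simp

theorem tendsto_sqrt_quadRootHi_div {hbar m : ℝ} (hhbar : 0 < hbar) (hm : 0 < m) (w c : ℝ) :
    Tendsto (fun v => √(quadRootHi (hbar ^ 2 / (4 * m ^ 2)) (v ^ 2 - w) c) / (2 * m * v / hbar))
      atTop (𝓝 1) := by
  set a := hbar ^ 2 / (4 * m ^ 2)
  refine tendsto_sqrt_div_of_tendsto_div_sq
    ((eventually_gt_atTop 0).mono fun v hv => by positivity) ?_
  have h := (((tendsto_quadRootHi_div_self a c).comp (tendsto_sq_sub_atTop w)).mul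
    (tendsto_sq_sub_div_sq w)).const_mul a
  rw [mul_one, mul_inv_cancel₀ (by positivity)] at h
  refine h.congr' ?_
  filter_upwards [eventually_ne_atTop 0, (tendsto_sq_sub_atTop w).eventually_ne_atTop 0]
    with v hv hb
  simp only [Function.comp_apply, a]
  field_simp
  ring

theorem dispersion_cutoffs_general
    (ωp w hbar m : ℝ) (hωp : 0 < ωp) (hhbar : 0 < hbar) (hm : 0 < m)
    (f : ℝ → ℝ)
    (hf : f = fun k => Real.sqrt (ωp ^ 2 + w * k ^ 2 + hbar ^ 2 * k ^ 4 / (4 * m ^ 2))) :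
    ∃ V : ℝ, 0 < V ∧ ∃ k1 k2 : ℝ → ℝ,
      (∀ v, V < v → ({k : ℝ | 0 < k ∧ f k < k * v} = Set.Ioo (k1 v) (k2 v)
        ∧ 0 < k1 v ∧ k1 v < k2 v)) ∧
      Tendsto (fun v => k1 v / (ωp / v)) atTop (nhds 1) ∧
      Tendsto (fun v => k2 v / (2 * m * v / hbar)) atTop (nhds 1) := by
  set a := hbar ^ 2 / (4 * m ^ 2)
  have ha : 0 < a := by positivity
  have hlarge : ∀ᶠ v in atTop, 0 < v ∧ 0 < v ^ 2 - w ∧ 4 * a * ωp ^ 2 < (v ^ 2 - w) ^ 2 :=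
    (eventually_gt_atTop 0).and <| ((tendsto_sq_sub_atTop w).eventually_gt_atTop 0).and <|
      ((tendsto_pow_atTop two_ne_zero).comp (tendsto_sq_sub_atTop w)).eventually_gt_atTop _
  obtain ⟨V, hV⟩ := eventually_atTop.1 hlarge
  refine ⟨max V 1, by positivity, fun v => √(quadRootLo a (v ^ 2 - w) (ωp ^ 2)),
    fun v => √(quadRootHi a (v ^ 2 - w) (ωp ^ 2)), fun v hv => ?_,
    tendsto_sqrt_quadRootLo_div hωp a w, tendsto_sqrt_quadRootHi_div hhbar hm w _⟩
  obtain ⟨hv, hb, hd⟩ := hV v ((le_max_left V 1).trans hv.le)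
  have hlo := quadRootLo_pos (a := a) hb (by positivity : 0 < ωp ^ 2)
  refine ⟨?_, Real.sqrt_pos.2 hlo,
    Real.sqrt_lt_sqrt hlo.le (quadRootLo_lt_quadRootHi ha hb hd)⟩
  simp only [hf, mul_div_right_comm (hbar ^ 2)]
  exact setOf_sqrt_lt_mul_eq_Ioo ha hv hb hd

/-- For the interpolated Langmuir dispersion law
f(k) = (ω_p² + w k² + ħ²k⁴/(4m²))^{1/2}, for large v the set
{k > 0 : f(k) < kv} is an open interval (k₁(v), k₂(v)) whose endpoints satisfy
k₁(v) ~ ω_p/v and k₂(v) ~ 2mv/ħ as v → ∞. -/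
theorem dispersion_cutoffs
    (ωp w hbar m : ℝ) (hωp : 0 < ωp) (hw : 0 < w) (hhbar : 0 < hbar) (hm : 0 < m)
    (f : ℝ → ℝ)
    (hf : f = fun k => Real.sqrt (ωp ^ 2 + w * k ^ 2 + hbar ^ 2 * k ^ 4 / (4 * m ^ 2))) :
    ∃ V : ℝ, 0 < V ∧ ∃ k1 k2 : ℝ → ℝ,
      (∀ v, V < v → ({k : ℝ | 0 < k ∧ f k < k * v} = Set.Ioo (k1 v) (k2 v)
        ∧ 0 < k1 v ∧ k1 v < k2 v)) ∧
      Tendsto (fun v => k1 v / (ωp / v)) atTop (nhds 1) ∧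
      Tendsto (fun v => k2 v / (2 * m * v / hbar)) atTop (nhds 1) :=
  dispersion_cutoffs_general ωp w hbar m hωp hhbar hm f hf
end

section
/- Given the low-k bound S₁ ≤ c₁·ω_p²·coth(ħω_pβ/2)·(v_F/v), the intermediate bound S₂ ≥ c₂·ω_p²·(ln ξ − (ξ²−1)/(2ξ²)) with ξ > 1 fixed, and the high-k bound S₃ ≤ c₃·ω_p²·(v_F/v), all with positive constants cᵢ, the total T = S₁ + S₂ + S₃ multiplied by (v_F/v)² satisfies: there exist constants 0 < a < b such that a(v_F/v)² ≤ (v_F²/(Z_p e ω_p)²)·(−dE/dx) ≤ b·(v_F/v)²·ln(v/v_F) for all sufficiently large v/v_F. -/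
set_option maxHeartbeats 1600000 in
/-- The Theorem of the paper: combining the low-k, intermediate and high-k
bounds for S₁, S₂, S₃, the fast projectile stopping power satisfies
a (v_F/v)² ≲ (v_F/(Z_p e ω_p))² (−dE/dx) ≲ (v_F/v)² ln(v/v_F) for large v/v_F. -/
theorem stopping_power_asymptotic_bounds
    (Zp e ωp vF β hbar : ℝ) (ξ : ℝ)
    (hZp : 0 < Zp) (he : 0 < e) (hωp : 0 < ωp) (hvF : 0 < vF)
    (hβ : 0 < β) (hhbar : 0 < hbar) (hξ : 1 < ξ)
    (c1 c2 c2' c3 : ℝ) (hc1 : 0 < c1) (hc2 : 0 < c2) (hc2' : 0 < c2') (hc3 : 0 < c3)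
    (S1 S2 S3 P : ℝ → ℝ) (V : ℝ) (hV : vF < V)
    (hP : ∀ v, P v = 2 * Zp ^ 2 * e ^ 2 / (Real.pi * v ^ 2) * (S1 v + S2 v + S3 v))
    (hS1nn : ∀ v, V ≤ v → 0 ≤ S1 v)
    (hS1 : ∀ v, V ≤ v → S1 v ≤ c1 * ωp ^ 2
        * (Real.cosh (hbar * ωp * β / 2) / Real.sinh (hbar * ωp * β / 2)) * (vF / v))
    (hS2l : ∀ v, V ≤ v →
        c2 * ωp ^ 2 * (Real.log ξ - (ξ ^ 2 - 1) / (2 * ξ ^ 2)) ≤ S2 v)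
    (hS2u : ∀ v, V ≤ v → S2 v ≤ c2' * ωp ^ 2 * Real.log (v / vF))
    (hS3nn : ∀ v, V ≤ v → 0 ≤ S3 v)
    (hS3 : ∀ v, V ≤ v → S3 v ≤ c3 * ωp ^ 2 * (vF / v)) :
    ∃ a b : ℝ, 0 < a ∧ a < b ∧ ∃ V' : ℝ, V ≤ V' ∧ ∀ v, V' ≤ v →
      a * (vF / v) ^ 2 ≤ (vF / (Zp * e * ωp)) ^ 2 * P v ∧
      (vF / (Zp * e * ωp)) ^ 2 * P v ≤ b * (vF / v) ^ 2 * Real.log (v / vF) := by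
  have hπ : (0:ℝ) < Real.pi := Real.pi_pos
  have hξ0 : (0:ℝ) < ξ := lt_trans one_pos hξ
  set L : ℝ := Real.log ξ - (ξ ^ 2 - 1) / (2 * ξ ^ 2) with hLdef
  have hlog : 1 - 1/ξ ≤ Real.log ξ := by
    have h := Real.log_le_sub_one_of_pos (show (0:ℝ) < 1/ξ by positivity)
    rw [Real.log_div one_ne_zero (ne_of_gt hξ0), Real.log_one] at h
    linarith
  have hL : 0 < L := by
    have hinv : 1/ξ * ξ = 1 := by field_simp
    have h1 : (ξ ^ 2 - 1) / (2 * ξ ^ 2) < 1 - 1/ξ := by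
      rw [div_lt_iff₀ (by positivity)]
      nlinarith [sq_nonneg (ξ - 1), mul_pos (sub_pos.mpr hξ) (sub_pos.mpr hξ)]
    simp only [hLdef]; linarith
  set C : ℝ := Real.cosh (hbar * ωp * β / 2) / Real.sinh (hbar * ωp * β / 2) with hCdef
  have hx : (0:ℝ) < hbar * ωp * β / 2 := by positivity
  clear_value L
  have hC : 0 < C := div_pos (Real.cosh_pos _) (Real.sinh_pos_iff.2 hx)
  clear_value C
  refine ⟨2 / Real.pi * c2 * L, 2 / Real.pi * c2 * L + 2 / Real.pi * (c1 * C + c2' + c3),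
    by positivity, by
      have : (0:ℝ) < 2 / Real.pi * (c1 * C + c2' + c3) := by positivity
      linarith, max V (Real.exp 1 * vF), le_max_left _ _, ?_⟩
  intro v hv
  have hvV : V ≤ v := le_trans (le_max_left _ _) hv
  have hve : Real.exp 1 * vF ≤ v := le_trans (le_max_right _ _) hv
  have hv0 : (0:ℝ) < v := lt_of_lt_of_le (by positivity) hve
  have hlogv : 1 ≤ Real.log (v / vF) := by
    rw [Real.le_log_iff_exp_le (by positivity)]
    rw [le_div_iff₀ hvF]
    linarith
  have hvFv : vF / v ≤ 1 := by
    rw [div_le_one hv0]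
    nlinarith [Real.one_le_exp (le_refl (0:ℝ))]
  have hvFv0 : 0 < vF / v := by positivity
  have hrw : (vF / (Zp * e * ωp)) ^ 2 * P v
      = 2 / Real.pi * (vF / v) ^ 2 * ((S1 v + S2 v + S3 v) / ωp ^ 2) := by
    rw [hP]; field_simp
  have hTlb : c2 * ωp ^ 2 * L ≤ S1 v + S2 v + S3 v := by
    have := hS2l v hvV
    have := hS1nn v hvV
    have := hS3nn v hvV
    linarith
  have hTub : S1 v + S2 v + S3 v ≤ (c1 * C + c2' + c3) * ωp ^ 2 * Real.log (v / vF) := by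
    have h1 := hS1 v hvV
    have h3 := hS3 v hvV
    have h2 := hS2u v hvV
    have hvl : vF / v ≤ Real.log (v / vF) := le_trans hvFv hlogv
    have e1 : c1 * ωp ^ 2 * C * (vF / v) ≤ c1 * ωp ^ 2 * C * Real.log (v / vF) :=
      mul_le_mul_of_nonneg_left hvl (by positivity)
    have e3 : c3 * ωp ^ 2 * (vF / v) ≤ c3 * ωp ^ 2 * Real.log (v / vF) :=
      mul_le_mul_of_nonneg_left hvl (by positivity)
    nlinarith
  constructor
  · rw [hrw]
    have hkey : c2 * L ≤ (S1 v + S2 v + S3 v) / ωp ^ 2 := by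
      rw [le_div_iff₀ (by positivity)]
      calc c2 * L * ωp ^ 2 = c2 * ωp ^ 2 * L := by ring
        _ ≤ S1 v + S2 v + S3 v := hTlb
    have hfac : (0:ℝ) ≤ 2 / Real.pi * (vF / v) ^ 2 := by positivity
    calc 2 / Real.pi * c2 * L * (vF / v) ^ 2
        = 2 / Real.pi * (vF / v) ^ 2 * (c2 * L) := by ring
      _ ≤ 2 / Real.pi * (vF / v) ^ 2 * ((S1 v + S2 v + S3 v) / ωp ^ 2) :=
          mul_le_mul_of_nonneg_left hkey hfac
  · rw [hrw]
    have hkey : (S1 v + S2 v + S3 v) / ωp ^ 2 ≤ (c1 * C + c2' + c3) * Real.log (v / vF) := by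
      rw [div_le_iff₀ (by positivity)]
      calc S1 v + S2 v + S3 v ≤ (c1 * C + c2' + c3) * ωp ^ 2 * Real.log (v / vF) := hTub
        _ = (c1 * C + c2' + c3) * Real.log (v / vF) * ωp ^ 2 := by ring
    have hfac : (0:ℝ) ≤ 2 / Real.pi * (vF / v) ^ 2 := by positivity
    have hextra : (0:ℝ) ≤ 2 / Real.pi * c2 * L * ((vF / v) ^ 2 * Real.log (v / vF)) := by
      have hlognn : (0:ℝ) ≤ Real.log (v / vF) := by linarith
      positivity
    calc 2 / Real.pi * (vF / v) ^ 2 * ((S1 v + S2 v + S3 v) / ωp ^ 2)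
        ≤ 2 / Real.pi * (vF / v) ^ 2 * ((c1 * C + c2' + c3) * Real.log (v / vF)) :=
          mul_le_mul_of_nonneg_left hkey hfac
      _ ≤ (2 / Real.pi * c2 * L + 2 / Real.pi * (c1 * C + c2' + c3)) * (vF / v) ^ 2
            * Real.log (v / vF) := by
          have h2 : (2 / Real.pi * c2 * L + 2 / Real.pi * (c1 * C + c2' + c3)) * (vF / v) ^ 2
              * Real.log (v / vF)
              = 2 / Real.pi * (vF / v) ^ 2 * ((c1 * C + c2' + c3) * Real.log (v / vF))
                + 2 / Real.pi * c2 * L * ((vF / v) ^ 2 * Real.log (v / vF)) := by ring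
          rw [h2]
          linarith [hextra]
end
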